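/- There is no nowhere-vanishing continuous section of the Hopf line bundle L₁ over S²; equivalently, there exist no f₁, f₂ ∈ C(S²) such that the function s := f₁a + f₂c on S³ (where f₁, f₂ are viewed as U(1)-invariant functions on S³) satisfies s·s̄ = 1. -/

import Mathlib

/-!
Restrict a nowhere-vanishing equivariant `s` to the disk `Φ w = (√(1 - |w|²), w)`, which sends
the unit circle onto the `U(1)`-orbit of `(0, 1)`; there equivariance gives `s (Φ w) = w s (Φ 1)`.
The disk is simply connected, so `s ∘ Φ / s (Φ 1)` has a continuous logarithm, and its restriction
would be a continuous logarithm of `w` on the unit circle, which cannot exist: along `t ↦ exp (t i)`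
it would have to grow by `2πi` over one turn and return to its initial value.
-/

/-- The 3-sphere, realized as the unit sphere in `ℂ²`. -/
abbrev S3 : Type := {p : ℂ × ℂ // ‖p.1‖ ^ 2 + ‖p.2‖ ^ 2 = 1}

/-- The first coordinate function `a : S³ → ℂ`. -/
def aF (x : S3) : ℂ := x.1.1

/-- The second coordinate function `c : S³ → ℂ`. -/
def cF (x : S3) : ℂ := x.1.2

/-- `ω := √(2/(1 + ||a|² − |c|²|))`, a `U(1)`-invariant function on `S³`. -/
noncomputable def omegaF (x : S3) : ℝ :=
  Real.sqrt (2 / (1 + |‖aF x‖ ^ 2 - ‖cF x‖ ^ 2|))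

/-- Two points of `S³` are in the same orbit of the diagonal `U(1)`-action. -/
def U1Rel (x y : S3) : Prop :=
  ∃ z : ℂ, ‖z‖ = 1 ∧ (y : ℂ × ℂ) = (z * (x : ℂ × ℂ).1, z * (x : ℂ × ℂ).2)

/-- A function on `S³` is `U(1)`-invariant (i.e., descends to `S² = S³/U(1)`). -/
def U1Invariant (f : S3 → ℂ) : Prop := ∀ x y : S3, U1Rel x y → f y = f x

/-- A function on `S³` is `U(1)`-equivariant of degree 1, i.e., is a continuous section of the
Hopf line bundle `L₁`: `s(λx) = λ s(x)`. -/
def U1Equivariant (s : S3 → ℂ) : Prop :=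
  ∀ (x y : S3) (z : ℂ), ‖z‖ = 1 →
    (y : ℂ × ℂ) = (z * (x : ℂ × ℂ).1, z * (x : ℂ × ℂ).2) → s y = z * s x

open Complex Metric

theorem exists_continuous_exp_eq {X : Type*} [TopologicalSpace X] [SimplyConnectedSpace X]
    [LocallyPathConnectedSpace X] {g : X → ℂ} (hg : Continuous g) (hg₀ : ∀ x, g x ≠ 0) :
    ∃ f : X → ℂ, Continuous f ∧ ∀ x, exp (f x) = g x := by
  obtain ⟨x₀⟩ : Nonempty X := inferInstance
  obtain ⟨f, ⟨-, hf⟩, -⟩ := isCoveringMapOn_exp.existsUnique_continuousMap_lifts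
    ⟨g, hg⟩ (exp_log (hg₀ x₀)) hg₀
  exact ⟨f, f.continuous, congrFun hf⟩

theorem not_exists_continuousOn_exp_eq_on_unitCircle :
    ¬ ∃ f : ℂ → ℂ, ContinuousOn f (sphere 0 1) ∧ ∀ w ∈ sphere (0 : ℂ) 1, exp (f w) = w := by
  rintro ⟨f, hf, hexp⟩
  have hcirc : ∀ t : ℝ, exp (t * I) ∈ sphere (0 : ℂ) 1 := fun t ↦ by simp
  have hf₁ : exp (f 1) = 1 := hexp 1 (by simp)
  -- Both `t ↦ f (exp (t I))` and `t ↦ t I + f 1` lift `t ↦ exp (t I)` and agree at `t = 0`.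
  have hlift : (fun t : ℝ ↦ f (exp (t * I))) = fun t : ℝ ↦ (t : ℂ) * I + f 1 := by
    refine isCoveringMap_exp.eq_of_comp_eq
      (hf.comp_continuous (by fun_prop) hcirc) (by fun_prop) ?_ 0 (by simp)
    funext t
    exact Subtype.ext (by simp [hexp _ (hcirc t), Complex.exp_add, hf₁])
  have h2π := congrFun hlift (2 * Real.pi)
  simp at h2π

noncomputable def unitDiskRetraction (w : ℂ) : ℂ := w / (max ‖w‖ 1 : ℝ)

theorem norm_unitDiskRetraction_le_one (w : ℂ) : ‖unitDiskRetraction w‖ ≤ 1 := by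
  have hpos : 0 < max ‖w‖ 1 := lt_max_of_lt_right one_pos
  rw [unitDiskRetraction, norm_div, norm_real, Real.norm_of_nonneg hpos.le, div_le_one hpos]
  exact le_max_left _ _

theorem unitDiskRetraction_of_norm_le_one {w : ℂ} (hw : ‖w‖ ≤ 1) : unitDiskRetraction w = w := by
  simp [unitDiskRetraction, max_eq_right hw]

theorem continuous_unitDiskRetraction : Continuous unitDiskRetraction :=
  continuous_id.div (by fun_prop) fun w ↦ ofReal_ne_zero.mpr (lt_max_of_lt_right one_pos).ne'

noncomputable def diskToS3 (w : ℂ) : S3 :=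
  ⟨(√(1 - ‖unitDiskRetraction w‖ ^ 2), unitDiskRetraction w), by
    have := norm_unitDiskRetraction_le_one w
    rw [norm_real, Real.norm_of_nonneg (Real.sqrt_nonneg _),
      Real.sq_sqrt (by nlinarith [norm_nonneg (unitDiskRetraction w)])]
    ring⟩

theorem continuous_diskToS3 : Continuous diskToS3 := by
  unfold diskToS3
  have := continuous_unitDiskRetraction
  fun_prop

theorem coe_diskToS3_of_norm_eq_one {w : ℂ} (hw : ‖w‖ = 1) : (diskToS3 w : ℂ × ℂ) = (0, w) := by
  simp [diskToS3, unitDiskRetraction_of_norm_le_one hw.le, hw]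

theorem continuous_aF : Continuous aF := continuous_fst.comp continuous_subtype_val

theorem continuous_cF : Continuous cF := continuous_snd.comp continuous_subtype_val

theorem U1Invariant.u1Equivariant_mul_aF_add_mul_cF {f₁ f₂ : S3 → ℂ} (h₁ : U1Invariant f₁)
    (h₂ : U1Invariant f₂) : U1Equivariant fun x ↦ f₁ x * aF x + f₂ x * cF x := by
  intro x y z hz hy
  beta_reduce
  rw [h₁ x y ⟨z, hz, hy⟩, h₂ x y ⟨z, hz, hy⟩, aF, cF, aF, cF, hy]
  ring

theorem U1Equivariant.exists_eq_zero {s : S3 → ℂ} (hs : Continuous s) (heq : U1Equivariant s) :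
    ∃ x, s x = 0 := by
  by_contra! hs₀
  obtain ⟨f, hf, hexp⟩ := exists_continuous_exp_eq (g := fun w ↦ s (diskToS3 w) / s (diskToS3 1))
    (by have := continuous_diskToS3; fun_prop) fun w ↦ div_ne_zero (hs₀ _) (hs₀ _)
  refine not_exists_continuousOn_exp_eq_on_unitCircle ⟨f, hf.continuousOn, fun w hw ↦ ?_⟩
  rw [mem_sphere_zero_iff_norm] at hw
  have hrot : s (diskToS3 w) = w * s (diskToS3 1) :=
    heq _ _ w hw (by simp [coe_diskToS3_of_norm_eq_one hw, coe_diskToS3_of_norm_eq_one norm_one])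
  rw [hexp, hrot, mul_div_cancel_right₀ _ (hs₀ _)]

/-- The Hopf line bundle `L₁` over `S²` has no nowhere-vanishing continuous
section: there are no `U(1)`-invariant continuous `f₁, f₂ : S³ → ℂ` such that
`s := f₁ a + f₂ c` satisfies `s s̄ = 1`. -/
theorem no_unimodular_section_of_hopf_line_bundle :
    ¬ ∃ f₁ f₂ : S3 → ℂ, Continuous f₁ ∧ Continuous f₂ ∧
      U1Invariant f₁ ∧ U1Invariant f₂ ∧
      ∀ x : S3, (f₁ x * aF x + f₂ x * cF x) * star (f₁ x * aF x + f₂ x * cF x) = 1 := by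
  rintro ⟨f₁, f₂, hc₁, hc₂, hi₁, hi₂, hunit⟩
  obtain ⟨x, hx⟩ := (hi₁.u1Equivariant_mul_aF_add_mul_cF hi₂).exists_eq_zero
    ((hc₁.mul continuous_aF).add (hc₂.mul continuous_cF))
  have hunit_x := hunit x
  rw [show f₁ x * aF x + f₂ x * cF x = 0 from hx, zero_mul] at hunit_x
  exact zero_ne_one hunit_x
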